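/- arXiv:1510.06953 — 5 statements merged into one kernel-verified Lean document; each statement's English description precedes it below -/
import Mathlib

section
/- For every fuzzy set u on ℝ^m (i.e., every function u : ℝ^m → [0,1]), the set D(u) = {α ∈ (0,1) : [u]_α ⊄ cl({u > α})} is at most countable, where cl denotes topological closure in ℝ^m. -/
open Set Metric

/-- For every fuzzy set `u` on `ℝ^m`, the set
`D(u) = {α ∈ (0,1) : [u]_α ⊄ cl({u > α})}` is at most countable. -/
theorem countable_D {m : ℕ} (u : EuclideanSpace ℝ (Fin m) → ℝ)
    (hu : ∀ x, u x ∈ Icc (0:ℝ) 1) :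
    Set.Countable {α : ℝ | α ∈ Ioo (0:ℝ) 1 ∧
      ¬ {x | α ≤ u x} ⊆ closure {x | α < u x}} := by
  classical
  obtain ⟨b, hbc, -, hb⟩ :=
    TopologicalSpace.exists_countable_basis (EuclideanSpace ℝ (Fin m))
  set D : Set ℝ := {α : ℝ | α ∈ Ioo (0:ℝ) 1 ∧
      ¬ {x | α ≤ u x} ⊆ closure {x | α < u x}} with hD
  have key : ∀ α ∈ D, ∃ t ∈ b, (∃ x ∈ t, u x = α) ∧ ∀ y ∈ t, u y ≤ α := by
    intro α hα
    obtain ⟨-, hns⟩ := hα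
    rw [not_subset] at hns
    obtain ⟨x, hx1, hx2⟩ := hns
    have hux : u x = α := by
      refine le_antisymm ?_ hx1
      by_contra h
      exact hx2 (subset_closure (by simpa using lt_of_not_ge h))
    have hxo : x ∈ (closure {x | α < u x})ᶜ := hx2
    obtain ⟨t, htb, hxt, hts⟩ :=
      hb.mem_nhds_iff.mp (isOpen_compl_iff.mpr isClosed_closure |>.mem_nhds hxo)
    refine ⟨t, htb, ⟨x, hxt, hux⟩, fun y hy => ?_⟩
    have : y ∉ closure {x | α < u x} := hts hy
    have : y ∉ {x | α < u x} := fun h => this (subset_closure h)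
    simpa using not_lt.mp this
  choose! f hf1 hf2 hf3 using key
  have hmaps : MapsTo f D b := fun α hα => hf1 α hα
  have hinj : InjOn f D := by
    intro α hα β hβ hfab
    by_contra hne
    wlog h : α < β generalizing α β
    · exact this hβ hα hfab.symm (Ne.symm hne) (lt_of_le_of_ne (not_lt.mp h) (Ne.symm hne))
    obtain ⟨x, hxt, hux⟩ := hf2 β hβ
    have : u x ≤ α := hf3 α hα x (hfab ▸ hxt)
    exact absurd (hux ▸ this) (not_le.mpr h)
  have himg : (f '' D).Countable := hbc.mono (image_subset_iff.mpr hmaps)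
  exact (Set.countable_of_injective_of_countable_image hinj himg)
end

section
/- Let u : ℝ^m → [0,1] be a fuzzy set, t ∈ ℝ^m, and r > 0 a real number. Then the set D_{u,t,r} = ⋃_{e ∈ S^{m−1}} D_{u,t,r,e} is at most countable, where S^{m−1} is the unit sphere in ℝ^m and D_{u,t,r,e} is the set of discontinuous points of S_{u,t,r}(e, ·). -/
/-!
Every discontinuous point `α` of `S_{u,t,r}(e, ·)`, of either kind, is a jump: the right limit
`⨆_{β > α} S(e, β)` (which is `⊥` in the first kind) lies strictly below the left limit
`⨅_{β < α} S(e, β)`. Moving `e` to `e'` changes `⟨e, x - t⟩` by at most `‖e' - e‖ * r` on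
`closedBall t r`, so for `e'` close enough to `e` the antitone function `S(e', ·)` keeps a jump,
hence is discontinuous at `α`. Taking `e'` in a countable dense set of directions, the union of
all `D_{u,t,r,e}` lies in countably many discontinuity sets of antitone functions `ℝ → EReal`,
each of which is countable.
-/

open Set Metric Filter Topology

/-- `S_{u,t,r}(e, α)`: the sup of `⟨e, x - t⟩` over `[u]_α ∩ closedBall t r`,
with value `⊥ = -∞` when this set is empty (`sSup ∅ = ⊥` in `EReal`). -/
noncomputable def Sfun {m : ℕ} (u : EuclideanSpace ℝ (Fin m) → ℝ)
    (t : EuclideanSpace ℝ (Fin m)) (r : ℝ)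
    (e : EuclideanSpace ℝ (Fin m)) (α : ℝ) : EReal :=
  sSup ((fun x => ((inner ℝ e (x - t) : ℝ) : EReal)) ''
    ({x | α ≤ u x} ∩ closedBall t r))

/-- The set `D_{u,t,r,e}` of discontinuous points `α ∈ (0,1)` of `S_{u,t,r}(e, ·)`:
(i) `S_{u,t,r}(e, α) ∈ ℝ` and (ii) either `S_{u,t,r}(e, β) = -∞` for all `β > α`, or
`-∞ < lim_{β→α+} S = ⨆_{β > α} S < lim_{β→α-} S = ⨅_{β < α} S`. -/
noncomputable def Dset {m : ℕ} (u : EuclideanSpace ℝ (Fin m) → ℝ)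
    (t : EuclideanSpace ℝ (Fin m)) (r : ℝ)
    (e : EuclideanSpace ℝ (Fin m)) : Set ℝ :=
  {α | α ∈ Ioo (0:ℝ) 1 ∧ Sfun u t r e α ≠ ⊥ ∧ Sfun u t r e α ≠ ⊤ ∧
    ((∀ β ∈ Ioc α 1, Sfun u t r e β = ⊥) ∨
      ((⊥ < ⨆ β ∈ Ioc α 1, Sfun u t r e β) ∧
        ((⨆ β ∈ Ioc α 1, Sfun u t r e β) < ⨅ β ∈ Ico (0:ℝ) α, Sfun u t r e β)))}

lemma not_continuousAt_of_eventually_le_of_eventually_ge {α β : Type*} [TopologicalSpace α]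
    [LinearOrder α] [OrderTopology α] [DenselyOrdered α] [NoMinOrder α] [NoMaxOrder α]
    [TopologicalSpace β] [LinearOrder β] [OrderClosedTopology β] {f : α → β} {x : α} {a b : β}
    (hab : a < b) (hleft : ∀ᶠ y in 𝓝[<] x, b ≤ f y) (hright : ∀ᶠ y in 𝓝[>] x, f y ≤ a) :
    ¬ContinuousAt f x := by
  intro hf
  have hb : b ≤ f x := ge_of_tendsto (hf.tendsto.mono_left nhdsWithin_le_nhds) hleft
  have ha : f x ≤ a := le_of_tendsto (hf.tendsto.mono_left nhdsWithin_le_nhds) hright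
  exact (hb.trans ha).not_gt hab

section

variable {m : ℕ} (u : EuclideanSpace ℝ (Fin m) → ℝ) (t : EuclideanSpace ℝ (Fin m)) (r : ℝ)

lemma Sfun_antitone (e : EuclideanSpace ℝ (Fin m)) : Antitone (Sfun u t r e) :=
  fun _ _ hαβ => sSup_le_sSup <| image_mono <|
    inter_subset_inter_left _ fun _ hx => hαβ.trans hx

variable {u t r}

lemma Sfun_le_coe_add_of_norm_sub_mul_le {e e' : EuclideanSpace ℝ (Fin m)} {α c ε : ℝ}
    (hε : ‖e' - e‖ * r ≤ ε) (h : Sfun u t r e α ≤ c) : Sfun u t r e' α ≤ ↑(c + ε) := by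
  refine sSup_le ?_
  rintro _ ⟨x, hx, rfl⟩
  have hc : inner ℝ e (x - t) ≤ c :=
    EReal.coe_le_coe_iff.1 ((le_sSup (mem_image_of_mem _ hx)).trans h)
  have hdiff : inner ℝ (e' - e) (x - t) ≤ ‖e' - e‖ * r :=
    (real_inner_le_norm _ _).trans
      (mul_le_mul_of_nonneg_left (mem_closedBall_iff_norm.1 hx.2) (norm_nonneg _))
  rw [inner_sub_left] at hdiff
  exact EReal.coe_le_coe_iff.2 (by linarith)

lemma iSup_lt_iInf_of_mem_Dset {e : EuclideanSpace ℝ (Fin m)} {α : ℝ} (hα : α ∈ Dset u t r e) :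
    (⨆ β ∈ Ioc α 1, Sfun u t r e β) < ⨅ β ∈ Ico (0:ℝ) α, Sfun u t r e β := by
  obtain ⟨-, hne_bot, -, hempty | ⟨-, hjump⟩⟩ := hα
  · have hleft : Sfun u t r e α ≤ ⨅ β ∈ Ico (0:ℝ) α, Sfun u t r e β :=
      le_iInf₂ fun β hβ => Sfun_antitone u t r e hβ.2.le
    rw [iSup₂_eq_bot.2 hempty]
    exact (bot_lt_iff_ne_bot.2 hne_bot).trans_le hleft
  · exact hjump

lemma exists_not_continuousAt_of_iSup_lt_iInf {C : Set (EuclideanSpace ℝ (Fin m))}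
    (hC : Dense C) {e : EuclideanSpace ℝ (Fin m)} {α : ℝ} (hα : α ∈ Ioo (0:ℝ) 1)
    (hjump : (⨆ β ∈ Ioc α 1, Sfun u t r e β) < ⨅ β ∈ Ico (0:ℝ) α, Sfun u t r e β) :
    ∃ e' ∈ C, ¬ContinuousAt (Sfun u t r e') α := by
  obtain ⟨a, hright_lt, hab⟩ := EReal.lt_iff_exists_real_btwn.1 hjump
  obtain ⟨b, hab, hlt_left⟩ := EReal.lt_iff_exists_real_btwn.1 hab
  rw [EReal.coe_lt_coe_iff] at hab
  set ε := (b - a) / 3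
  have hε : 0 < ε := by simp only [ε]; linarith
  have hU : IsOpen {e' : EuclideanSpace ℝ (Fin m) | ‖e' - e‖ * r < ε} :=
    isOpen_lt (by fun_prop) continuous_const
  obtain ⟨e', he'C, he'⟩ := hC.exists_mem_open hU ⟨e, by simpa using hε⟩
  refine ⟨e', he'C, not_continuousAt_of_eventually_le_of_eventually_ge
    (a := ((a + ε : ℝ) : EReal)) (b := ((b - ε : ℝ) : EReal))
    (EReal.coe_lt_coe_iff.2 (by simp only [ε]; linarith)) ?_ ?_⟩
  · filter_upwards [Ioo_mem_nhdsLT hα.1] with β hβ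
    by_contra! hsmall
    have hle : Sfun u t r e β ≤ ↑(b - ε + ε) :=
      Sfun_le_coe_add_of_norm_sub_mul_le (by rw [norm_sub_rev]; exact he'.le) hsmall.le
    rw [sub_add_cancel] at hle
    exact (hlt_left.trans_le ((iInf₂_le β ⟨hβ.1.le, hβ.2⟩).trans hle)).false
  · filter_upwards [Ioo_mem_nhdsGT hα.2] with β hβ
    exact Sfun_le_coe_add_of_norm_sub_mul_le he'.le
      ((le_iSup₂ (f := fun β _ => Sfun u t r e β) β ⟨hβ.1, hβ.2.le⟩).trans hright_lt.le)

variable (u t r)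

theorem countable_iUnion_Dset : (⋃ e, Dset u t r e).Countable := by
  obtain ⟨C, hC_countable, hC_dense⟩ :=
    TopologicalSpace.exists_countable_dense (EuclideanSpace ℝ (Fin m))
  refine (hC_countable.biUnion fun e' _ =>
    (Sfun_antitone u t r e').countable_not_continuousAt).mono ?_
  intro α hα
  obtain ⟨e, hαe⟩ := mem_iUnion.1 hα
  obtain ⟨e', he'C, hdisc⟩ :=
    exists_not_continuousAt_of_iSup_lt_iInf hC_dense hαe.1 (iSup_lt_iInf_of_mem_Dset hαe)
  exact mem_biUnion he'C hdisc

end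

theorem countable_Dutr_general {m : ℕ} (u : EuclideanSpace ℝ (Fin m) → ℝ)
    (t : EuclideanSpace ℝ (Fin m)) (r : ℝ) :
    Set.Countable (⋃ e ∈ sphere (0 : EuclideanSpace ℝ (Fin m)) 1, Dset u t r e) :=
  (countable_iUnion_Dset u t r).mono (iUnion₂_subset fun e _ => subset_iUnion _ e)

/-- For a fuzzy set `u` on `ℝ^m`, `t ∈ ℝ^m` and `r > 0`, the set
`D_{u,t,r} = ⋃_{e ∈ S^{m-1}} D_{u,t,r,e}` is at most countable. -/
theorem countable_Dutr {m : ℕ} (u : EuclideanSpace ℝ (Fin m) → ℝ)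
    (hu : ∀ x, u x ∈ Icc (0:ℝ) 1)
    (t : EuclideanSpace ℝ (Fin m)) (r : ℝ) (hr : 0 < r) :
    Set.Countable (⋃ e ∈ sphere (0 : EuclideanSpace ℝ (Fin m)) 1, Dset u t r e) :=
  countable_Dutr_general u t r
end

section
/- Let u : ℝ^m → [0,1] be a fuzzy set, t ∈ ℝ^m, r > 0, and let ϖ be a countable dense subset of the unit sphere S^{m−1} ⊆ ℝ^m. Then ⋃_{e ∈ S^{m−1}} D_{u,t,r,e} = ⋃_{e ∈ ϖ} D_{u,t,r,e}. -/
open Set Metric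

open Filter Topology

/-
The set `{e | α ∈ D_{u,t,r,e}}` is open. Since only points of `closedBall t r` count, replacing the
direction `e` by `e'` changes every value `S_{u,t,r}(e, β)` by at most `‖e - e'‖ r`, and whether it
is `-∞` does not depend on `e` at all. So a positive gap between the one-sided limits at `α` stays
positive for all `e'` close to `e`, and such an `e'` can be found in the dense set `ϖ`.
-/

namespace EReal

theorem biSup_le_biSup_add {ι : Type*} {s : Set ι} {f g : ι → EReal} {c : ℝ}
    (h : ∀ i ∈ s, f i ≤ g i + c) : ⨆ i ∈ s, f i ≤ (⨆ i ∈ s, g i) + c :=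
  iSup₂_le fun i hi => (h i hi).trans (add_le_add_left (le_iSup₂ (f := fun i _ => g i) i hi) _)

theorem biInf_sub_le_biInf {ι : Type*} {s : Set ι} {f g : ι → EReal} {c : ℝ}
    (h : ∀ i ∈ s, g i ≤ f i + c) : (⨅ i ∈ s, g i) - c ≤ ⨅ i ∈ s, f i :=
  le_iInf₂ fun i hi => sub_le_of_le_add ((iInf₂_le i hi).trans (h i hi))

end EReal

theorem inner_sub_le_norm_mul_of_mem_closedBall {E : Type*} [NormedAddCommGroup E]
    [InnerProductSpace ℝ E] (e : E) {x t : E} {r : ℝ} (hx : x ∈ closedBall t r) :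
    inner ℝ e (x - t) ≤ ‖e‖ * r :=
  (real_inner_le_norm _ _).trans <|
    mul_le_mul_of_nonneg_left (by rwa [← dist_eq_norm, ← mem_closedBall]) (norm_nonneg e)

section Sfun

variable {m : ℕ} {u : EuclideanSpace ℝ (Fin m) → ℝ} {t : EuclideanSpace ℝ (Fin m)} {r : ℝ}

theorem Sfun_eq_bot_iff {e : EuclideanSpace ℝ (Fin m)} {β : ℝ} :
    Sfun u t r e β = ⊥ ↔ {x | β ≤ u x} ∩ closedBall t r = ∅ := by
  simp only [Sfun, sSup_eq_bot, forall_mem_image, EReal.coe_ne_bot, imp_false,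
    eq_empty_iff_forall_notMem]

theorem Sfun_eq_bot_iff_Sfun_eq_bot (e e' : EuclideanSpace ℝ (Fin m)) {β : ℝ} :
    Sfun u t r e β = ⊥ ↔ Sfun u t r e' β = ⊥ :=
  Sfun_eq_bot_iff.trans Sfun_eq_bot_iff.symm

theorem Sfun_le_norm_mul (e : EuclideanSpace ℝ (Fin m)) (β : ℝ) :
    Sfun u t r e β ≤ ((‖e‖ * r : ℝ) : EReal) :=
  sSup_le <| by
    rintro _ ⟨x, hx, rfl⟩
    exact EReal.coe_le_coe (inner_sub_le_norm_mul_of_mem_closedBall e hx.2)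

theorem Sfun_ne_top (e : EuclideanSpace ℝ (Fin m)) (β : ℝ) : Sfun u t r e β ≠ ⊤ :=
  ((Sfun_le_norm_mul e β).trans_lt (EReal.coe_lt_top _)).ne

theorem coe_inner_le_Sfun (e : EuclideanSpace ℝ (Fin m)) {β : ℝ} {x : EuclideanSpace ℝ (Fin m)}
    (hx : x ∈ {x | β ≤ u x} ∩ closedBall t r) :
    ((inner ℝ e (x - t) : ℝ) : EReal) ≤ Sfun u t r e β :=
  le_sSup (mem_image_of_mem _ hx)

theorem Sfun_le_Sfun_add (e e' : EuclideanSpace ℝ (Fin m)) (β : ℝ) :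
    Sfun u t r e β ≤ Sfun u t r e' β + ((‖e - e'‖ * r : ℝ) : EReal) :=
  sSup_le <| by
    rintro _ ⟨x, hx, rfl⟩
    have hle : inner ℝ e (x - t) ≤ inner ℝ e' (x - t) + ‖e - e'‖ * r := by
      have := inner_sub_le_norm_mul_of_mem_closedBall (e - e') hx.2
      rw [inner_sub_left] at this
      linarith
    calc ((inner ℝ e (x - t) : ℝ) : EReal)
        ≤ ((inner ℝ e' (x - t) : ℝ) : EReal) + ((‖e - e'‖ * r : ℝ) : EReal) := by
          exact_mod_cast hle
      _ ≤ Sfun u t r e' β + ((‖e - e'‖ * r : ℝ) : EReal) :=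
          add_le_add_left (coe_inner_le_Sfun e' hx) _

theorem biSup_Sfun_eq_bot_iff_biSup_Sfun_eq_bot (e e' : EuclideanSpace ℝ (Fin m)) (s : Set ℝ) :
    ⨆ β ∈ s, Sfun u t r e β = ⊥ ↔ ⨆ β ∈ s, Sfun u t r e' β = ⊥ := by
  simp only [iSup₂_eq_bot, Sfun_eq_bot_iff_Sfun_eq_bot e e']

theorem biSup_Sfun_lt_biInf_Sfun_of_dist_lt {e e' : EuclideanSpace ℝ (Fin m)} {I J : Set ℝ}
    {G F : ℝ} (hG : ⨆ β ∈ I, Sfun u t r e β = G) (hF : ⨅ β ∈ J, Sfun u t r e β = F)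
    (hc : ‖e - e'‖ * r < (F - G) / 2) :
    ⨆ β ∈ I, Sfun u t r e' β < ⨅ β ∈ J, Sfun u t r e' β := by
  set c := ‖e - e'‖ * r
  have hsup : ⨆ β ∈ I, Sfun u t r e' β ≤ ((G + c : ℝ) : EReal) := by
    have := EReal.biSup_le_biSup_add (s := I) fun β _ =>
      Sfun_le_Sfun_add (u := u) (t := t) (r := r) e' e β
    rwa [hG, norm_sub_rev, ← EReal.coe_add] at this
  have hinf : ((F - c : ℝ) : EReal) ≤ ⨅ β ∈ J, Sfun u t r e' β := by
    have := EReal.biInf_sub_le_biInf (s := J) fun β _ =>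
      Sfun_le_Sfun_add (u := u) (t := t) (r := r) e e' β
    rwa [hF, ← EReal.coe_sub] at this
  exact hsup.trans_lt ((EReal.coe_lt_coe_iff.mpr (by linarith)).trans_le hinf)

theorem eventually_mem_Dset {e : EuclideanSpace ℝ (Fin m)} {α : ℝ} (h : α ∈ Dset u t r e) :
    ∀ᶠ e' in 𝓝 e, α ∈ Dset u t r e' := by
  obtain ⟨hα, hbot, -, hcase⟩ := h
  have hbot' : ∀ e', Sfun u t r e' α ≠ ⊥ := fun e' =>
    (Sfun_eq_bot_iff_Sfun_eq_bot e' e).not.mpr hbot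
  rcases hcase with hempty | ⟨hsup_bot, hgap⟩
  · exact .of_forall fun e' => ⟨hα, hbot' e', Sfun_ne_top e' α, Or.inl fun β hβ =>
      (Sfun_eq_bot_iff_Sfun_eq_bot e e').mp (hempty β hβ)⟩
  have hsup_bot' : ∀ e', ⊥ < ⨆ β ∈ Ioc α 1, Sfun u t r e' β := fun e' =>
    bot_lt_iff_ne_bot.mpr ((biSup_Sfun_eq_bot_iff_biSup_Sfun_eq_bot e' e _).not.mpr hsup_bot.ne')
  set g := ⨆ β ∈ Ioc α 1, Sfun u t r e β with hg
  set f := ⨅ β ∈ Ico (0:ℝ) α, Sfun u t r e β with hf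
  have hf_top : f ≠ ⊤ := ne_top_of_le_ne_top (Sfun_ne_top e 0) (iInf₂_le 0 ⟨le_rfl, hα.1⟩)
  lift g to ℝ using ⟨(hgap.trans_le le_top).ne, hsup_bot.ne'⟩ with G
  lift f to ℝ using ⟨hf_top, (hsup_bot.trans hgap).ne'⟩ with F
  have hdist : Tendsto (fun e' => ‖e - e'‖ * r) (𝓝 e) (𝓝 0) := by
    have hcont : Continuous fun e' => ‖e - e'‖ * r := by fun_prop
    simpa using hcont.tendsto e
  filter_upwards [hdist.eventually (gt_mem_nhds (half_pos (sub_pos.mpr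
    (EReal.coe_lt_coe_iff.mp hgap))))] with e' he'
  exact ⟨hα, hbot' e', Sfun_ne_top e' α,
    Or.inr ⟨hsup_bot' e', biSup_Sfun_lt_biInf_Sfun_of_dist_lt hg.symm hf.symm he'⟩⟩

theorem isOpen_setOf_mem_Dset (α : ℝ) : IsOpen {e | α ∈ Dset u t r e} :=
  isOpen_iff_eventually.mpr fun _ => eventually_mem_Dset

end Sfun

theorem union_Dset_eq_union_countable_dense_general {m : ℕ}
    (u : EuclideanSpace ℝ (Fin m) → ℝ)
    (t : EuclideanSpace ℝ (Fin m)) (r : ℝ)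
    (ϖ : Set (EuclideanSpace ℝ (Fin m)))
    (hϖsub : ϖ ⊆ sphere (0 : EuclideanSpace ℝ (Fin m)) 1)
    (hϖd : sphere (0 : EuclideanSpace ℝ (Fin m)) 1 ⊆ closure ϖ) :
    (⋃ e ∈ sphere (0 : EuclideanSpace ℝ (Fin m)) 1, Dset u t r e) =
      ⋃ e ∈ ϖ, Dset u t r e := by
  refine Subset.antisymm ?_ (biUnion_subset_biUnion_left hϖsub)
  simp only [subset_def, mem_iUnion₂]
  rintro α ⟨e, he, hα⟩
  obtain ⟨e', hα', he'⟩ :=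
    mem_closure_iff.mp (hϖd he) _ (isOpen_setOf_mem_Dset (u := u) (t := t) (r := r) α) hα
  exact ⟨e', he', hα'⟩

/-- If `ϖ` is a countable dense subset of the unit sphere `S^{m-1}`, then
`⋃_{e ∈ S^{m-1}} D_{u,t,r,e} = ⋃_{e ∈ ϖ} D_{u,t,r,e}`. -/
theorem union_Dset_eq_union_countable_dense {m : ℕ}
    (u : EuclideanSpace ℝ (Fin m) → ℝ) (hu : ∀ x, u x ∈ Icc (0:ℝ) 1)
    (t : EuclideanSpace ℝ (Fin m)) (r : ℝ) (hr : 0 < r)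
    (ϖ : Set (EuclideanSpace ℝ (Fin m)))
    (hϖsub : ϖ ⊆ sphere (0 : EuclideanSpace ℝ (Fin m)) 1)
    (hϖc : ϖ.Countable)
    (hϖd : sphere (0 : EuclideanSpace ℝ (Fin m)) 1 ⊆ closure ϖ) :
    (⋃ e ∈ sphere (0 : EuclideanSpace ℝ (Fin m)) 1, Dset u t r e) =
      ⋃ e ∈ ϖ, Dset u t r e :=
  union_Dset_eq_union_countable_dense_general u t r ϖ hϖsub hϖd
end

section
/- Let y, q ∈ ℝ^m with y ≠ q and let ε > 0. Then there exists δ > 0 such that for every r with ‖y − q‖ ≤ r < ‖y − q‖ + δ and every x ∈ ℝ^m with ‖x − q‖ ≤ r and ‖x − y‖ > ε, setting e = (y − q)/‖y − q‖, one has ⟨e, x − q⟩ ≤ ‖y − q‖ − ε²/(4‖y − q‖). -/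
/-!
With `u = x - q` and `v = y - q`, expanding `ε² < ‖u - v‖²` gives
`2⟪v, u⟫ < ‖u‖² + ‖v‖² - ε² ≤ r² + ‖v‖² - ε²`. By continuity of squaring, `r² ≤ ‖v‖² + ε²/2`
once `r` is close enough to `‖v‖`, and then `⟪v, u⟫ ≤ ‖v‖² - ε²/4`; divide by `‖v‖`.
-/

open Topology

theorem inner_normalize_le_of_lt_norm_sub {E : Type*} [NormedAddCommGroup E]
    [InnerProductSpace ℝ E] {u v : E} {r ε : ℝ} (hv : v ≠ 0) (hε : 0 ≤ ε)
    (hu : ‖u‖ ≤ r) (huv : ε < ‖u - v‖) (hr : r ^ 2 ≤ ‖v‖ ^ 2 + ε ^ 2 / 2) :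
    inner ℝ (‖v‖⁻¹ • v) u ≤ ‖v‖ - ε ^ 2 / (4 * ‖v‖) := by
  have hv_pos : 0 < ‖v‖ := norm_pos_iff.mpr hv
  have hsq : ε ^ 2 < ‖u‖ ^ 2 - 2 * inner ℝ u v + ‖v‖ ^ 2 := by
    rw [← norm_sub_sq_real]
    exact pow_lt_pow_left₀ huv hε two_ne_zero
  have hu_sq : ‖u‖ ^ 2 ≤ r ^ 2 := pow_le_pow_left₀ (norm_nonneg u) hu 2
  have h_inner : inner ℝ v u ≤ ‖v‖ * (‖v‖ - ε ^ 2 / (4 * ‖v‖)) := by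
    have h_rhs : ‖v‖ * (‖v‖ - ε ^ 2 / (4 * ‖v‖)) = ‖v‖ ^ 2 - ε ^ 2 / 4 := by
      field_simp
    rw [real_inner_comm, h_rhs]
    linarith
  rw [real_inner_smul_left, inv_mul_le_iff₀ hv_pos]
  exact h_inner

theorem exists_pos_forall_sq_lt_sq_add (R : ℝ) {c : ℝ} (hc : 0 < c) :
    ∃ δ > 0, ∀ r : ℝ, |r - R| < δ → r ^ 2 < R ^ 2 + c := by
  have h : ∀ᶠ r in 𝓝 R, r ^ 2 < R ^ 2 + c :=
    (continuous_pow 2).continuousAt.eventually_lt continuousAt_const (by linarith)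
  simpa only [Real.dist_eq] using Metric.eventually_nhds_iff.mp h

/-- For `y ≠ q` and `ε > 0`, there is `δ > 0` such that whenever
`‖y - q‖ ≤ r < ‖y - q‖ + δ`, `‖x - q‖ ≤ r` and `‖x - y‖ > ε`, setting
`e = (y - q)/‖y - q‖`, one has `⟨e, x - q⟩ ≤ ‖y - q‖ - ε²/(4‖y - q‖)`. -/
theorem exists_delta_inner_le {m : ℕ} (y q : EuclideanSpace ℝ (Fin m))
    (hyq : y ≠ q) (ε : ℝ) (hε : 0 < ε) :
    ∃ δ > 0, ∀ r : ℝ, ‖y - q‖ ≤ r → r < ‖y - q‖ + δ →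
      ∀ x : EuclideanSpace ℝ (Fin m), ‖x - q‖ ≤ r → ε < ‖x - y‖ →
        (inner ℝ (‖y - q‖⁻¹ • (y - q)) (x - q) : ℝ) ≤
          ‖y - q‖ - ε ^ 2 / (4 * ‖y - q‖) := by
  obtain ⟨δ, hδ, hsq⟩ := exists_pos_forall_sq_lt_sq_add ‖y - q‖ (by positivity : 0 < ε ^ 2 / 2)
  refine ⟨δ, hδ, fun r hr_ge hr_lt x hx hxy => ?_⟩
  have hr_sq : r ^ 2 ≤ ‖y - q‖ ^ 2 + ε ^ 2 / 2 :=
    (hsq r (abs_sub_lt_iff.mpr ⟨by linarith, by linarith⟩)).le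
  refine inner_normalize_le_of_lt_norm_sub (sub_ne_zero.mpr hyq) hε.le hx ?_ hr_sq
  rwa [sub_sub_sub_cancel_right]
end

section
/- Let v : ℝ^m → [0,1] be a fuzzy set such that cl({v > α}) ⊆ [v]_α for all α ∈ (0,1) (for instance, v upper semicontinuous). Then the set P(v) = {α ∈ (0,1) : cl({v > α}) is a proper subset of [v]_α} is at most countable. -/
open Set

/-- If `v : ℝ^m → [0,1]` satisfies `cl({v > α}) ⊆ [v]_α` for all `α ∈ (0,1)`, then
`P(v) = {α ∈ (0,1) : cl({v > α}) ⊊ [v]_α}` is at most countable. -/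
theorem countable_P {m : ℕ} (v : EuclideanSpace ℝ (Fin m) → ℝ)
    (hv : ∀ x, v x ∈ Icc (0:ℝ) 1)
    (hcl : ∀ α ∈ Ioo (0:ℝ) 1, closure {x | α < v x} ⊆ {x | α ≤ v x}) :
    Set.Countable {α : ℝ | α ∈ Ioo (0:ℝ) 1 ∧
      closure {x | α < v x} ⊂ {x | α ≤ v x}} := by
  classical
  obtain ⟨b, hbc, -, hb⟩ :=
    TopologicalSpace.exists_countable_basis (EuclideanSpace ℝ (Fin m))
  set P := {α : ℝ | α ∈ Ioo (0:ℝ) 1 ∧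
      closure {x | α < v x} ⊂ {x | α ≤ v x}} with hP
  have H : ∀ α ∈ P, ∃ t, t ∈ b ∧ (∃ x ∈ t, v x = α) ∧ ∀ y ∈ t, v y ≤ α := by
    rintro α ⟨hα, hsub⟩
    obtain ⟨x, hx1, hx2⟩ := exists_of_ssubset hsub
    have hvx : v x = α := by
      by_contra h
      exact hx2 (subset_closure (lt_of_le_of_ne hx1 (Ne.symm h)))
    obtain ⟨t, htb, hxt, hts⟩ := hb.exists_subset_of_mem_open hx2
      (isOpen_compl_iff.mpr isClosed_closure)
    refine ⟨t, htb, ⟨x, hxt, hvx⟩, fun y hy => ?_⟩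
    by_contra h
    exact (hts hy) (subset_closure (lt_of_not_ge h))
  let f : ℝ → Set (EuclideanSpace ℝ (Fin m)) :=
    fun α => if h : α ∈ P then (H α h).choose else ∅
  have hf : ∀ α (h : α ∈ P), f α = (H α h).choose := fun α h => dif_pos h
  have hmaps : MapsTo f P b := fun α hα => by
    rw [hf α hα]; exact (H α hα).choose_spec.1
  have hinj : InjOn f P := by
    intro α hα β hβ hfe
    by_contra hne
    wlog hlt : α < β generalizing α β
    · exact this hβ hα hfe.symm (Ne.symm hne)
        ((Ne.lt_or_gt hne).resolve_left hlt)
    obtain ⟨x, hxt, hvx⟩ := (H β hβ).choose_spec.2.1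
    have hle : v x ≤ α := (H α hα).choose_spec.2.2 x (by
      rw [← hf α hα, hfe, hf β hβ]; exact hxt)
    rw [hvx] at hle
    exact absurd hlt (not_lt.mpr hle)
  exact hmaps.countable_of_injOn hinj hbc
end
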